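/- Let n ≥ 1, M > 0, C̃ > 0, L_ℓ ≥ 0. Let 𝒜̃ be a nonempty set of continuously differentiable vector fields a : ℝⁿ → ℝⁿ satisfying ‖a(x)‖ ≤ M and operator norm ‖Da(x)‖ ≤ M for all x. Let 𝒳 denote the set of continuously differentiable compactly supported functions m : ℝⁿ → ℝ with ‖m‖_{H¹} := (‖m‖_{L²}² + ‖∇m‖_{L²}²)^{1/2} ≤ C̃. Let ℓ : 𝒳 × 𝒜̃ → ℝ be bounded and satisfy |ℓ(m₁,a) − ℓ(m₂,a)| ≤ L_ℓ·‖m₁ − m₂‖_{L²} for all m₁, m₂ ∈ 𝒳 and a ∈ 𝒜̃. For m ∈ 𝒳 and q ∈ L²(ℝⁿ) define the Hamiltonian H(m,q) := sup_{a ∈ 𝒜̃} ( ∫_{ℝⁿ} q(x)·div(a m)(x) dx − ℓ(m,a) ), where div(a m) = a·∇m + m·div a. Then H(m,q) is finite and for all m₁, m₂ ∈ 𝒳 and q₁, q₂ ∈ L²(ℝⁿ): |H(m₁,q₁) − H(m₂,q₂)| ≤ (1+n)·M·C̃·‖q₁ − q₂‖_{L²} + (1+n)·M·‖q₁‖_{L²}·‖m₁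 − m₂‖_{H¹} + L_ℓ·‖m₁ − m₂‖_{L²}. -/

import Mathlib

open MeasureTheory

/-- The divergence of a vector field on `ℝⁿ`, as the trace of its Fréchet
derivative. -/
noncomputable def divergence {n : ℕ}
    (v : EuclideanSpace ℝ (Fin n) → EuclideanSpace ℝ (Fin n))
    (x : EuclideanSpace ℝ (Fin n)) : ℝ :=
  LinearMap.trace ℝ (EuclideanSpace ℝ (Fin n)) (fderiv ℝ v x).toLinearMap

/-- The `H¹` norm of a function on `ℝⁿ`. -/
noncomputable def H1norm {n : ℕ} (f : EuclideanSpace ℝ (Fin n) → ℝ) : ℝ :=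
  Real.sqrt ((∫ x, f x ^ 2) + ∫ x, ‖fderiv ℝ f x‖ ^ 2)

/-- The class `𝒳` of `C¹` compactly supported densities with `H¹` norm at most
`C̃`. -/
def memX {n : ℕ} (Ctil : ℝ) (m : EuclideanSpace ℝ (Fin n) → ℝ) : Prop :=
  ContDiff ℝ 1 m ∧ HasCompactSupport m ∧ H1norm m ≤ Ctil

/-- The Hamiltonian `H(m,q) = sup_{a ∈ 𝒜̃} (⟨q, div(a m)⟩ − ℓ(m,a))`. -/
noncomputable def Ham {n : ℕ}
    (𝒜 : Set (EuclideanSpace ℝ (Fin n) → EuclideanSpace ℝ (Fin n)))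
    (ℓ : (EuclideanSpace ℝ (Fin n) → ℝ) →
      (EuclideanSpace ℝ (Fin n) → EuclideanSpace ℝ (Fin n)) → ℝ)
    (m : EuclideanSpace ℝ (Fin n) → ℝ)
    (q : EuclideanSpace ℝ (Fin n) → ℝ) : ℝ :=
  sSup ((fun a => (∫ x, q x * divergence (fun x' => m x' • a x') x) - ℓ m a) '' 𝒜)

/-! ### Auxiliary lemmas -/

lemma trace_eq_sum {n : ℕ} (T : EuclideanSpace ℝ (Fin n) →ₗ[ℝ] EuclideanSpace ℝ (Fin n)) :
    LinearMap.trace ℝ _ T = ∑ i, T ((EuclideanSpace.basisFun (Fin n) ℝ).toBasis i) i := by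
  classical
  rw [LinearMap.trace_eq_matrix_trace ℝ (EuclideanSpace.basisFun (Fin n) ℝ).toBasis T]
  rw [Matrix.trace]
  congr 1
  ext i
  simp [Matrix.diag, LinearMap.toMatrix_apply]

lemma abs_coord_le {n : ℕ} (v : EuclideanSpace ℝ (Fin n)) (i : Fin n) : |v i| ≤ ‖v‖ := by
  rw [EuclideanSpace.norm_eq, ← Real.sqrt_sq_eq_abs]
  apply Real.sqrt_le_sqrt
  have := Finset.single_le_sum (f := fun j => ‖v j‖ ^ 2) (fun j _ => sq_nonneg _)
    (Finset.mem_univ i)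
  simpa [Real.norm_eq_abs, sq_abs] using this

lemma norm_basisFun {n : ℕ} (i : Fin n) :
    ‖(EuclideanSpace.basisFun (Fin n) ℝ).toBasis i‖ = 1 := by
  rw [OrthonormalBasis.coe_toBasis]
  exact (EuclideanSpace.basisFun (Fin n) ℝ).orthonormal.1 i

lemma abs_trace_le {n : ℕ} (T : EuclideanSpace ℝ (Fin n) →L[ℝ] EuclideanSpace ℝ (Fin n)) :
    |LinearMap.trace ℝ _ T.toLinearMap| ≤ n * ‖T‖ := by
  rw [trace_eq_sum]
  calc |∑ i, T.toLinearMap ((EuclideanSpace.basisFun (Fin n) ℝ).toBasis i) i|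
      ≤ ∑ i, |T.toLinearMap ((EuclideanSpace.basisFun (Fin n) ℝ).toBasis i) i| :=
        Finset.abs_sum_le_sum_abs _ _
    _ ≤ ∑ _i : Fin n, ‖T‖ := by
        refine Finset.sum_le_sum fun i _ => ?_
        refine (abs_coord_le _ i).trans ?_
        have h3 := T.le_opNorm ((EuclideanSpace.basisFun (Fin n) ℝ).toBasis i)
        rwa [norm_basisFun, mul_one] at h3
    _ = n * ‖T‖ := by
        rw [Finset.sum_const, Finset.card_univ, Fintype.card_fin, nsmul_eq_mul]

lemma trace_smulRight {n : ℕ} (c : EuclideanSpace ℝ (Fin n) →L[ℝ] ℝ)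
    (v : EuclideanSpace ℝ (Fin n)) :
    LinearMap.trace ℝ _ (c.smulRight v).toLinearMap = c v := by
  rw [trace_eq_sum]
  have h : ∀ i, (c.smulRight v).toLinearMap ((EuclideanSpace.basisFun (Fin n) ℝ).toBasis i) i
      = c ((EuclideanSpace.basisFun (Fin n) ℝ).toBasis i) * v i := by
    intro i; simp [ContinuousLinearMap.smulRight_apply]
  simp_rw [h]
  have hv : v = ∑ i, v i • (EuclideanSpace.basisFun (Fin n) ℝ).toBasis i := by
    have := ((EuclideanSpace.basisFun (Fin n) ℝ).toBasis).sum_repr v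
    simp only [OrthonormalBasis.coe_toBasis_repr_apply, EuclideanSpace.basisFun_repr] at this
    exact this.symm
  conv_rhs => rw [hv]
  rw [map_sum]
  congr 1; ext i
  rw [ContinuousLinearMap.map_smul, smul_eq_mul, mul_comm]

lemma divergence_smul {n : ℕ} {m : EuclideanSpace ℝ (Fin n) → ℝ}
    {a : EuclideanSpace ℝ (Fin n) → EuclideanSpace ℝ (Fin n)}
    {x : EuclideanSpace ℝ (Fin n)}
    (hm : DifferentiableAt ℝ m x) (ha : DifferentiableAt ℝ a x) :
    divergence (fun x' => m x' • a x') x = m x * divergence a x + fderiv ℝ m x (a x) := by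
  unfold divergence
  rw [fderiv_fun_smul hm ha]
  rw [ContinuousLinearMap.coe_add, map_add]
  congr 1
  · rw [ContinuousLinearMap.coe_smul, LinearMap.map_smul, smul_eq_mul]
  · exact trace_smulRight _ _

lemma continuous_traceCLM (n : ℕ) :
    Continuous (fun T : EuclideanSpace ℝ (Fin n) →L[ℝ] EuclideanSpace ℝ (Fin n) =>
      LinearMap.trace ℝ (EuclideanSpace ℝ (Fin n)) T.toLinearMap) := by
  exact LinearMap.continuous_of_finiteDimensional
    ((LinearMap.trace ℝ (EuclideanSpace ℝ (Fin n))).comp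
      (ContinuousLinearMap.coeLM ℝ))

lemma divergence_continuous {n : ℕ}
    {f : EuclideanSpace ℝ (Fin n) → EuclideanSpace ℝ (Fin n)}
    (hf : ContDiff ℝ 1 f) : Continuous (divergence f) := by
  exact (continuous_traceCLM n).comp (hf.continuous_fderiv one_ne_zero)

lemma divergence_compactSupport {n : ℕ}
    {f : EuclideanSpace ℝ (Fin n) → EuclideanSpace ℝ (Fin n)}
    (hf : HasCompactSupport f) : HasCompactSupport (divergence f) := by
  have h1 : HasCompactSupport (fderiv ℝ f) := HasCompactSupport.fderiv (𝕜 := ℝ) hf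
  have h2 : divergence f = (fun T : EuclideanSpace ℝ (Fin n) →L[ℝ] EuclideanSpace ℝ (Fin n) =>
      LinearMap.trace ℝ (EuclideanSpace ℝ (Fin n)) T.toLinearMap) ∘ (fderiv ℝ f) := rfl
  rw [h2]
  exact h1.comp_left (by simp)

lemma divergence_memℒp {n : ℕ}
    {m : EuclideanSpace ℝ (Fin n) → ℝ}
    {a : EuclideanSpace ℝ (Fin n) → EuclideanSpace ℝ (Fin n)}
    (hm : ContDiff ℝ 1 m) (hmc : HasCompactSupport m) (ha : ContDiff ℝ 1 a) :
    MemLp (fun x => divergence (fun x' => m x' • a x') x) 2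
      (volume : Measure (EuclideanSpace ℝ (Fin n))) := by
  have hsm : ContDiff ℝ 1 (fun x => m x • a x) := hm.smul ha
  have hsc : HasCompactSupport (fun x => m x • a x) := hmc.smul_right
  exact (divergence_continuous hsm).memLp_of_hasCompactSupport
    (divergence_compactSupport hsc)

lemma cs_integral {α : Type*} [MeasurableSpace α] {μ : Measure α} (f g : α → ℝ)
    (hf : MemLp f 2 μ) (hg : MemLp g 2 μ) :
    ∫ x, |f x| * |g x| ∂μ ≤ Real.sqrt (∫ x, f x ^ 2 ∂μ) * Real.sqrt (∫ x, g x ^ 2 ∂μ) := by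
  have hconj : Real.HolderConjugate 2 2 := Real.HolderConjugate.two_two
  have h2 : (ENNReal.ofReal (2:ℝ)) = 2 := by norm_num
  have hf' : MemLp (fun x => |f x|) (ENNReal.ofReal (2:ℝ)) μ := by
    rw [h2]
    simpa only [Real.norm_eq_abs] using hf.norm
  have hg' : MemLp (fun x => |g x|) (ENNReal.ofReal (2:ℝ)) μ := by
    rw [h2]
    simpa only [Real.norm_eq_abs] using hg.norm
  have := integral_mul_le_Lp_mul_Lq_of_nonneg hconj
    (Filter.Eventually.of_forall fun x => abs_nonneg (f x))
    (Filter.Eventually.of_forall fun x => abs_nonneg (g x)) hf' hg'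
  calc ∫ x, |f x| * |g x| ∂μ
      ≤ (∫ x, |f x| ^ (2:ℝ) ∂μ) ^ (1/(2:ℝ)) * (∫ x, |g x| ^ (2:ℝ) ∂μ) ^ (1/(2:ℝ)) := this
    _ = Real.sqrt (∫ x, f x ^ 2 ∂μ) * Real.sqrt (∫ x, g x ^ 2 ∂μ) := by
        have e1 : ∀ (h : α → ℝ), (fun x => |h x| ^ (2:ℝ)) = fun x => h x ^ 2 := by
          intro h; funext x
          rw [show ((2:ℝ) = ((2:ℕ):ℝ)) by norm_num, Real.rpow_natCast, sq_abs]
        rw [Real.sqrt_eq_rpow, Real.sqrt_eq_rpow]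
        congr 1
        · congr 1; exact congrArg (fun F => ∫ x, F x ∂μ) (e1 f)
        · congr 1; exact congrArg (fun F => ∫ x, F x ∂μ) (e1 g)

lemma mul_integrable {α : Type*} [MeasurableSpace α] {μ : Measure α} {f g : α → ℝ}
    (hf : MemLp f 2 μ) (hg : MemLp g 2 μ) :
    Integrable (fun x => f x * g x) μ := by
  have : MemLp (f • g) 1 μ := hg.smul hf
  rw [← memLp_one_iff_integrable]
  exact this

lemma pointwise_bound {n : ℕ} {M : ℝ}
    {m : EuclideanSpace ℝ (Fin n) → ℝ}
    {a : EuclideanSpace ℝ (Fin n) → EuclideanSpace ℝ (Fin n)}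
    (hm : Differentiable ℝ m) (ha : Differentiable ℝ a)
    (haM : ∀ x, ‖a x‖ ≤ M) (haD : ∀ x, ‖fderiv ℝ a x‖ ≤ M)
    (x : EuclideanSpace ℝ (Fin n)) :
    |divergence (fun x' => m x' • a x') x| ≤ M * ‖fderiv ℝ m x‖ + n * M * |m x| := by
  have hM0 : 0 ≤ M := le_trans (norm_nonneg _) (haM x)
  rw [divergence_smul (hm x) (ha x)]
  refine (abs_add_le _ _).trans ?_
  rw [abs_mul]
  have h1 : |divergence a x| ≤ n * M := by
    refine (abs_trace_le (fderiv ℝ a x)).trans ?_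
    exact mul_le_mul_of_nonneg_left (haD x) (Nat.cast_nonneg n)
  have h2 : |fderiv ℝ m x (a x)| ≤ ‖fderiv ℝ m x‖ * M := by
    refine le_trans ?_ (mul_le_mul_of_nonneg_left (haM x) (norm_nonneg _))
    exact (fderiv ℝ m x).le_opNorm (a x)
  have h3 : |m x| * |divergence a x| ≤ |m x| * (n * M) :=
    mul_le_mul_of_nonneg_left h1 (abs_nonneg _)
  nlinarith [abs_nonneg (m x), norm_nonneg (fderiv ℝ m x)]

lemma pairing_bound {n : ℕ} {M : ℝ}
    {m : EuclideanSpace ℝ (Fin n) → ℝ}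
    {a : EuclideanSpace ℝ (Fin n) → EuclideanSpace ℝ (Fin n)}
    {q : EuclideanSpace ℝ (Fin n) → ℝ}
    (hm : ContDiff ℝ 1 m) (hmc : HasCompactSupport m)
    (ha : ContDiff ℝ 1 a) (haM : ∀ x, ‖a x‖ ≤ M) (haD : ∀ x, ‖fderiv ℝ a x‖ ≤ M)
    (hq : MemLp q 2 (volume : Measure (EuclideanSpace ℝ (Fin n)))) :
    |∫ x, q x * divergence (fun x' => m x' • a x') x| ≤
      (1 + n) * M * Real.sqrt (∫ x, q x ^ 2) * H1norm m := by
  have hM0 : 0 ≤ M := le_trans (norm_nonneg _) (haM 0)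
  set d := fun x => divergence (fun x' => m x' • a x') x with hd
  have hd2 : MemLp d 2 (volume : Measure (EuclideanSpace ℝ (Fin n))) :=
    divergence_memℒp hm hmc ha
  have hmem : MemLp m 2 (volume : Measure (EuclideanSpace ℝ (Fin n))) :=
    (hm.continuous).memLp_of_hasCompactSupport hmc
  have hDm2 : MemLp (fun x => ‖fderiv ℝ m x‖) 2
      (volume : Measure (EuclideanSpace ℝ (Fin n))) := by
    refine Continuous.memLp_of_hasCompactSupport ?_ ?_
    · exact (hm.continuous_fderiv one_ne_zero).norm
    · exact (HasCompactSupport.fderiv (𝕜 := ℝ) hmc).norm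
  -- step 1 : |∫ q d| ≤ ∫ |q| |d|
  have step1 : |∫ x, q x * d x| ≤ ∫ x, |q x| * |d x| := by
    have := norm_integral_le_integral_norm (μ := (volume : Measure (EuclideanSpace ℝ (Fin n))))
      (f := fun x => q x * d x)
    simpa only [Real.norm_eq_abs, abs_mul] using this
  -- step 2 : pointwise domination
  have intL : Integrable (fun x => |q x| * |d x|)
      (volume : Measure (EuclideanSpace ℝ (Fin n))) := by
    simpa only [abs_mul] using (mul_integrable hq hd2).abs
  have hq2 : MemLp (fun x => |q x|) 2 (volume : Measure (EuclideanSpace ℝ (Fin n))) := by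
    simpa only [Real.norm_eq_abs] using hq.norm
  have hm2 : MemLp (fun x => |m x|) 2 (volume : Measure (EuclideanSpace ℝ (Fin n))) := by
    simpa only [Real.norm_eq_abs] using hmem.norm
  have int1 : Integrable (fun x => |q x| * (M * ‖fderiv ℝ m x‖))
      (volume : Measure (EuclideanSpace ℝ (Fin n))) :=
    mul_integrable hq2 (hDm2.const_mul M)
  have int2 : Integrable (fun x => |q x| * (n * M * |m x|))
      (volume : Measure (EuclideanSpace ℝ (Fin n))) :=
    mul_integrable hq2 (hm2.const_mul (n * M))
  have step2 : ∫ x, |q x| * |d x| ≤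
      ∫ x, (|q x| * (M * ‖fderiv ℝ m x‖) + |q x| * (n * M * |m x|)) := by
    refine integral_mono intL (int1.add int2) fun x => ?_
    have hpt := pointwise_bound (hm.differentiable one_ne_zero) (ha.differentiable one_ne_zero)
      haM haD x
    have := mul_le_mul_of_nonneg_left hpt (abs_nonneg (q x))
    calc |q x| * |d x| ≤ |q x| * (M * ‖fderiv ℝ m x‖ + ↑n * M * |m x|) := this
      _ = |q x| * (M * ‖fderiv ℝ m x‖) + |q x| * (↑n * M * |m x|) := by ring
  -- step 3 : split, pull constants, Cauchy-Schwarz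
  have step3 : ∫ x, (|q x| * (M * ‖fderiv ℝ m x‖) + |q x| * (n * M * |m x|)) =
      M * (∫ x, |q x| * ‖fderiv ℝ m x‖) + (n * M) * (∫ x, |q x| * |m x|) := by
    rw [integral_add int1 int2]
    congr 1
    · rw [← integral_const_mul]
      congr 1; funext x; ring
    · rw [← integral_const_mul]
      congr 1; funext x; ring
  have cs1 : ∫ x, |q x| * ‖fderiv ℝ m x‖ ≤
      Real.sqrt (∫ x, q x ^ 2) * Real.sqrt (∫ x, ‖fderiv ℝ m x‖ ^ 2) := by
    have := cs_integral q (fun x => ‖fderiv ℝ m x‖) hq hDm2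
    simpa only [abs_of_nonneg (norm_nonneg _)] using this
  have cs2 : ∫ x, |q x| * |m x| ≤
      Real.sqrt (∫ x, q x ^ 2) * Real.sqrt (∫ x, m x ^ 2) :=
    cs_integral q m hq hmem
  -- step 4 : compare with the H¹ norm
  have hInt1 : (0:ℝ) ≤ ∫ x, m x ^ 2 := integral_nonneg fun x => sq_nonneg _
  have hInt2 : (0:ℝ) ≤ ∫ x, ‖fderiv ℝ m x‖ ^ 2 := integral_nonneg fun x => sq_nonneg _
  have hH1 : Real.sqrt (∫ x, ‖fderiv ℝ m x‖ ^ 2) ≤ H1norm m := by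
    unfold H1norm
    exact Real.sqrt_le_sqrt (le_add_of_nonneg_left hInt1)
  have hH2 : Real.sqrt (∫ x, m x ^ 2) ≤ H1norm m := by
    unfold H1norm
    exact Real.sqrt_le_sqrt (le_add_of_nonneg_right hInt2)
  have hq0 : (0:ℝ) ≤ Real.sqrt (∫ x, q x ^ 2) := Real.sqrt_nonneg _
  have hd0 : (0:ℝ) ≤ Real.sqrt (∫ x, ‖fderiv ℝ m x‖ ^ 2) := Real.sqrt_nonneg _
  have hm0 : (0:ℝ) ≤ Real.sqrt (∫ x, m x ^ 2) := Real.sqrt_nonneg _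
  have hn0 : (0:ℝ) ≤ (n:ℝ) := Nat.cast_nonneg n
  calc |∫ x, q x * d x| ≤ ∫ x, |q x| * |d x| := step1
    _ ≤ ∫ x, (|q x| * (M * ‖fderiv ℝ m x‖) + |q x| * (n * M * |m x|)) := step2
    _ = M * (∫ x, |q x| * ‖fderiv ℝ m x‖) + (n * M) * (∫ x, |q x| * |m x|) := step3
    _ ≤ M * (Real.sqrt (∫ x, q x ^ 2) * Real.sqrt (∫ x, ‖fderiv ℝ m x‖ ^ 2)) +
        (n * M) * (Real.sqrt (∫ x, q x ^ 2) * Real.sqrt (∫ x, m x ^ 2)) := by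
        refine add_le_add ?_ ?_
        · exact mul_le_mul_of_nonneg_left cs1 hM0
        · exact mul_le_mul_of_nonneg_left cs2 (by positivity)
    _ ≤ (1 + n) * M * Real.sqrt (∫ x, q x ^ 2) * H1norm m := by
        have hH0 : (0:ℝ) ≤ H1norm m := Real.sqrt_nonneg _
        nlinarith [mul_le_mul_of_nonneg_left hH1 (mul_nonneg hM0 hq0),
          mul_le_mul_of_nonneg_left hH2 (mul_nonneg (mul_nonneg hn0 hM0) hq0)]
/-- (Lemma 4.2.) The Hamiltonian of the infinite-dimensional
HJB equation is finite and Lipschitz-type continuous in both arguments. -/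
theorem hamiltonian_lipschitz
    (n : ℕ) (hn : 1 ≤ n) (M Ctil Lell : ℝ)
    (hM : 0 < M) (hC : 0 < Ctil) (hLell : 0 ≤ Lell)
    (𝒜 : Set (EuclideanSpace ℝ (Fin n) → EuclideanSpace ℝ (Fin n)))
    (h𝒜ne : 𝒜.Nonempty)
    (h𝒜 : ∀ a ∈ 𝒜, ContDiff ℝ 1 a ∧ (∀ x, ‖a x‖ ≤ M) ∧ (∀ x, ‖fderiv ℝ a x‖ ≤ M))
    (ℓ : (EuclideanSpace ℝ (Fin n) → ℝ) →
      (EuclideanSpace ℝ (Fin n) → EuclideanSpace ℝ (Fin n)) → ℝ)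
    (Nℓ : ℝ)
    (hℓbdd : ∀ m, memX Ctil m → ∀ a ∈ 𝒜, |ℓ m a| ≤ Nℓ)
    (hℓlip : ∀ m₁ m₂, memX Ctil m₁ → memX Ctil m₂ → ∀ a ∈ 𝒜,
      |ℓ m₁ a - ℓ m₂ a| ≤ Lell * Real.sqrt (∫ x, (m₁ x - m₂ x) ^ 2)) :
    ∀ m₁ m₂ : EuclideanSpace ℝ (Fin n) → ℝ, memX Ctil m₁ → memX Ctil m₂ →
    ∀ q₁ q₂ : EuclideanSpace ℝ (Fin n) → ℝ,
      MemLp q₁ 2 (volume : Measure (EuclideanSpace ℝ (Fin n))) →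
      MemLp q₂ 2 (volume : Measure (EuclideanSpace ℝ (Fin n))) →
      BddAbove ((fun a =>
        (∫ x, q₁ x * divergence (fun x' => m₁ x' • a x') x) - ℓ m₁ a) '' 𝒜) ∧
      |Ham 𝒜 ℓ m₁ q₁ - Ham 𝒜 ℓ m₂ q₂| ≤
        (1 + n) * M * Ctil * Real.sqrt (∫ x, (q₁ x - q₂ x) ^ 2) +
        (1 + n) * M * Real.sqrt (∫ x, q₁ x ^ 2) *
          H1norm (fun x => m₁ x - m₂ x) +
        Lell * Real.sqrt (∫ x, (m₁ x - m₂ x) ^ 2) := by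
  intro m₁ m₂ hm₁ hm₂ q₁ q₂ hq₁ hq₂
  have hM0 : 0 ≤ M := hM.le
  -- generic boundedness of the image set
  have bddgen : ∀ (m q : EuclideanSpace ℝ (Fin n) → ℝ), memX Ctil m →
      MemLp q 2 (volume : Measure (EuclideanSpace ℝ (Fin n))) →
      BddAbove ((fun a =>
        (∫ x, q x * divergence (fun x' => m x' • a x') x) - ℓ m a) '' 𝒜) := by
    intro m q hm hq
    refine ⟨(1 + n) * M * Real.sqrt (∫ x, q x ^ 2) * Ctil + Nℓ, ?_⟩
    rintro y ⟨a, haA, rfl⟩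
    obtain ⟨ha1, haM, haD⟩ := h𝒜 a haA
    have h1 := pairing_bound hm.1 hm.2.1 ha1 haM haD hq
    have h2 := hℓbdd m hm a haA
    have h3 : (1 + (n:ℝ)) * M * Real.sqrt (∫ x, q x ^ 2) * H1norm m ≤
        (1 + (n:ℝ)) * M * Real.sqrt (∫ x, q x ^ 2) * Ctil :=
      mul_le_mul_of_nonneg_left hm.2.2 (by positivity)
    have h4 := le_abs_self (∫ x, q x * divergence (fun x' => m x' • a x') x)
    have h5 := (abs_le.mp h2).1
    simp only
    linarith
  refine ⟨bddgen m₁ q₁ hm₁ hq₁, ?_⟩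
  have hBdd₁ := bddgen m₁ q₁ hm₁ hq₁
  have hBdd₂ := bddgen m₂ q₂ hm₂ hq₂
  set δ := (1 + (n:ℝ)) * M * Ctil * Real.sqrt (∫ x, (q₁ x - q₂ x) ^ 2) +
      (1 + (n:ℝ)) * M * Real.sqrt (∫ x, q₁ x ^ 2) * H1norm (fun x => m₁ x - m₂ x) +
      Lell * Real.sqrt (∫ x, (m₁ x - m₂ x) ^ 2) with hδdef
  -- the key pointwise-in-`a` estimate
  have hdiff : ∀ a ∈ 𝒜,
      |((∫ x, q₁ x * divergence (fun x' => m₁ x' • a x') x) - ℓ m₁ a) -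
        ((∫ x, q₂ x * divergence (fun x' => m₂ x' • a x') x) - ℓ m₂ a)| ≤ δ := by
    intro a haA
    obtain ⟨ha1, haM, haD⟩ := h𝒜 a haA
    have hΔ1 : ContDiff ℝ 1 (fun x => m₁ x - m₂ x) := hm₁.1.sub hm₂.1
    have hΔc : HasCompactSupport (fun x => m₁ x - m₂ x) := by
      have h1 : (fun x => m₁ x - m₂ x) = m₁ + (-m₂) := by
        funext x; simp [sub_eq_add_neg]
      rw [h1]
      exact hm₁.2.1.add hm₂.2.1.neg
    have hd₁ := divergence_memℒp hm₁.1 hm₁.2.1 ha1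
    have hd₂ := divergence_memℒp hm₂.1 hm₂.2.1 ha1
    have hdΔ := divergence_memℒp hΔ1 hΔc ha1
    have hq₁₂ : MemLp (fun x => q₁ x - q₂ x) 2
        (volume : Measure (EuclideanSpace ℝ (Fin n))) := hq₁.sub hq₂
    have key : (∫ x, q₁ x * divergence (fun x' => m₁ x' • a x') x) -
        (∫ x, q₂ x * divergence (fun x' => m₂ x' • a x') x) =
        (∫ x, (q₁ x - q₂ x) * divergence (fun x' => m₂ x' • a x') x) +
        (∫ x, q₁ x * divergence (fun x' => (m₁ x' - m₂ x') • a x') x) := by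
      rw [← integral_sub (mul_integrable hq₁ hd₁) (mul_integrable hq₂ hd₂),
          ← integral_add (mul_integrable hq₁₂ hd₂) (mul_integrable hq₁ hdΔ)]
      refine integral_congr_ae (Filter.Eventually.of_forall fun x => ?_)
      have e1 : divergence (fun x' => (m₁ x' - m₂ x') • a x') x =
          divergence (fun x' => m₁ x' • a x') x -
            divergence (fun x' => m₂ x' • a x') x := by
        rw [divergence_smul ((hΔ1.differentiable one_ne_zero) x) ((ha1.differentiable one_ne_zero) x),
            divergence_smul ((hm₁.1.differentiable one_ne_zero) x) ((ha1.differentiable one_ne_zero) x),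
            divergence_smul ((hm₂.1.differentiable one_ne_zero) x) ((ha1.differentiable one_ne_zero) x)]
        have e2 : fderiv ℝ (fun x' => m₁ x' - m₂ x') x = fderiv ℝ m₁ x - fderiv ℝ m₂ x :=
          fderiv_sub ((hm₁.1.differentiable one_ne_zero) x) ((hm₂.1.differentiable one_ne_zero) x)
        rw [e2, ContinuousLinearMap.sub_apply]
        ring
      simp only
      rw [e1]
      ring
    have t1 := pairing_bound hm₂.1 hm₂.2.1 ha1 haM haD hq₁₂
    have t1' : |∫ x, (q₁ x - q₂ x) * divergence (fun x' => m₂ x' • a x') x| ≤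
        (1 + (n:ℝ)) * M * Ctil * Real.sqrt (∫ x, (q₁ x - q₂ x) ^ 2) := by
      refine le_trans t1 ?_
      calc (1 + (n:ℝ)) * M * Real.sqrt (∫ x, (q₁ x - q₂ x) ^ 2) * H1norm m₂
          ≤ (1 + (n:ℝ)) * M * Real.sqrt (∫ x, (q₁ x - q₂ x) ^ 2) * Ctil :=
            mul_le_mul_of_nonneg_left hm₂.2.2 (by positivity)
        _ = (1 + (n:ℝ)) * M * Ctil * Real.sqrt (∫ x, (q₁ x - q₂ x) ^ 2) := by ring
    have t2 : |∫ x, q₁ x * divergence (fun x' => (m₁ x' - m₂ x') • a x') x| ≤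
        (1 + (n:ℝ)) * M * Real.sqrt (∫ x, q₁ x ^ 2) *
          H1norm (fun x => m₁ x - m₂ x) :=
      pairing_bound hΔ1 hΔc ha1 haM haD hq₁
    have t3 := hℓlip m₁ m₂ hm₁ hm₂ a haA
    set A := ∫ x, (q₁ x - q₂ x) * divergence (fun x' => m₂ x' • a x') x
    set B := ∫ x, q₁ x * divergence (fun x' => (m₁ x' - m₂ x') • a x') x
    set C := ℓ m₁ a - ℓ m₂ a
    have hre : ((∫ x, q₁ x * divergence (fun x' => m₁ x' • a x') x) - ℓ m₁ a) -
        ((∫ x, q₂ x * divergence (fun x' => m₂ x' • a x') x) - ℓ m₂ a) =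
        (A + B) - C := by
      rw [← key]; ring
    rw [hre]
    have habs1 := abs_add_le (A + B) (-C)
    have habs2 := abs_add_le A B
    rw [abs_neg] at habs1
    have : |A + B - C| ≤ |A| + |B| + |C| := by
      rw [sub_eq_add_neg]; linarith
    refine this.trans ?_
    rw [hδdef]
    linarith
  -- conclude by comparing the two suprema
  have S₁ne : ((fun a =>
      (∫ x, q₁ x * divergence (fun x' => m₁ x' • a x') x) - ℓ m₁ a) '' 𝒜).Nonempty :=
    h𝒜ne.image _
  have S₂ne : ((fun a =>
      (∫ x, q₂ x * divergence (fun x' => m₂ x' • a x') x) - ℓ m₂ a) '' 𝒜).Nonempty :=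
    h𝒜ne.image _
  have h1 : Ham 𝒜 ℓ m₁ q₁ ≤ Ham 𝒜 ℓ m₂ q₂ + δ := by
    unfold Ham
    refine csSup_le S₁ne ?_
    rintro y ⟨a, haA, rfl⟩
    have hd := hdiff a haA
    have hle := le_csSup hBdd₂ (Set.mem_image_of_mem _ haA)
    simp only at hle ⊢
    linarith [(abs_le.mp hd).2]
  have h2 : Ham 𝒜 ℓ m₂ q₂ ≤ Ham 𝒜 ℓ m₁ q₁ + δ := by
    unfold Ham
    refine csSup_le S₂ne ?_
    rintro y ⟨a, haA, rfl⟩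
    have hd := hdiff a haA
    have hle := le_csSup hBdd₁ (Set.mem_image_of_mem _ haA)
    simp only at hle ⊢
    linarith [(abs_le.mp hd).1]
  rw [abs_sub_le_iff]
  constructor <;> linarith
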